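/- arXiv:2508.20185 — 3 statements merged into one kernel-verified Lean document; each statement's English description precedes it below -/
import Mathlib

section
/- Let {|φ_l⟩} and {|δ_l⟩} be two orthonormal bases of a finite-dimensional Hilbert space H, and let Ṽ be a linear operator on H ⊗ ℂ^D such that (Ṽ ⊗ 𝟙_D)(|φ_l⟩ ⊗ |φ⁺_D⟩) = |δ_l⟩ ⊗ |φ⁺_D⟩ for every l (where the middle ℂ^D factor of Ṽ is paired with the first half of |φ⁺_D⟩). Then Ṽ = (Σ_l |δ_l⟩⟨φ_l|) ⊗ 𝟙_D. -/
/-!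
Contracting the middle factor with half of `|φ⁺_D⟩` turns the hypothesis into a statement about
the blocks `Ṽ_{ab} = (𝟙 ⊗ ⟨a|) Ṽ (𝟙 ⊗ |b⟩)` of `Ṽ`: up to the common factor `1/√D`, each block
maps `φ_l` to `δ_{ab} δ_l`. A matrix is determined by its values on a spanning family, and by
orthonormality of the `φ_l` the matrix `Σ_l |δ_l⟩⟨φ_l|` sends `φ_l` to `δ_l`, so
`Ṽ_{ab} = δ_{ab} Σ_l |δ_l⟩⟨φ_l|`.
-/

open Matrix Kronecker BigOperators

noncomputable def maxEnt (D : ℕ) : Fin D × Fin D → ℂ :=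
  fun p => if p.1 = p.2 then (1 / (Real.sqrt D : ℂ)) else 0

namespace Matrix

variable {R ι κ m n : Type*} [Fintype ι]

theorem ext_of_mulVec_of_span_eq_top [CommSemiring R] {A B : Matrix m ι R} {φ : κ → ι → R}
    (hspan : Submodule.span R (Set.range φ) = ⊤) (h : ∀ l, A *ᵥ φ l = B *ᵥ φ l) : A = B :=
  mulVec_injective <| congrArg DFunLike.coe <|
    (LinearMap.ext_on hspan (by rintro _ ⟨l, rfl⟩; exact h l) : A.mulVecLin = B.mulVecLin)

theorem sum_outer_mulVec_of_orthonormal [Fintype κ] [DecidableEq κ] [Semiring R] [StarRing R]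
    {φ : κ → ι → R} (hφ : ∀ l m, star (φ l) ⬝ᵥ φ m = if l = m then (1 : R) else 0)
    (w : κ → m → R) (l : κ) :
    (fun i j => ∑ l, w l i * star (φ l j) : Matrix m ι R) *ᵥ φ l = w l := by
  funext i
  calc ∑ j, (∑ l', w l' i * star (φ l' j)) * φ l j
      = ∑ l', w l' i * (star (φ l') ⬝ᵥ φ l) := by
        simp only [Finset.sum_mul, mul_assoc, dotProduct, Finset.mul_sum, Pi.star_apply]
        exact Finset.sum_comm
    _ = w l i := by simp [hφ]

theorem kronecker_one_mulVec_apply [Fintype m] [Fintype n] [DecidableEq n] [Semiring R]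
    (A : Matrix κ m R) (w : m × n → R) (p : κ) (b : n) :
    ((A ⊗ₖ (1 : Matrix n n R)) *ᵥ w) (p, b) = (A *ᵥ fun q => w (q, b)) p := by
  simp [mulVec, dotProduct, Fintype.sum_prod_type, one_apply]

end Matrix

theorem maxEnt_apply (D : ℕ) (a b : Fin D) :
    maxEnt D (a, b) = (Real.sqrt D : ℂ)⁻¹ * (1 : Matrix (Fin D) (Fin D) ℂ) a b := by
  simp [maxEnt, one_apply]

theorem kronecker_one_mulVec_maxEnt_apply {ι : Type*} [Fintype ι] {D : ℕ}
    (V : Matrix (ι × Fin D) (ι × Fin D) ℂ) (v : ι → ℂ) (i : ι) (a b : Fin D) :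
    ((V ⊗ₖ (1 : Matrix (Fin D) (Fin D) ℂ)) *ᵥ fun p => v p.1.1 * maxEnt D (p.1.2, p.2))
      ((i, a), b) = (Real.sqrt D : ℂ)⁻¹ * (V.submatrix (·, a) (·, b) *ᵥ v) i := by
  rw [kronecker_one_mulVec_apply]
  simp only [mulVec, dotProduct, Fintype.sum_prod_type, maxEnt_apply, one_apply, mul_ite,
    mul_one, mul_zero, Finset.sum_ite_eq', Finset.mem_univ, if_true, Finset.mul_sum, submatrix_apply]
  exact Finset.sum_congr rfl fun _ _ => by ring

theorem submatrix_mulVec_of_kronecker_one_mulVec_maxEnt {ι : Type*} [Fintype ι] {D : ℕ}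
    {V : Matrix (ι × Fin D) (ι × Fin D) ℂ} {v w : ι → ℂ}
    (h : (V ⊗ₖ (1 : Matrix (Fin D) (Fin D) ℂ)) *ᵥ (fun p => v p.1.1 * maxEnt D (p.1.2, p.2)) =
      fun p => w p.1.1 * maxEnt D (p.1.2, p.2)) (a b : Fin D) :
    V.submatrix (·, a) (·, b) *ᵥ v = (1 : Matrix (Fin D) (Fin D) ℂ) a b • w := by
  have hD : (Real.sqrt D : ℂ)⁻¹ ≠ 0 := by
    have : 0 < D := a.pos
    simp only [ne_eq, inv_eq_zero, Complex.ofReal_eq_zero, Real.sqrt_eq_zero', not_le]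
    exact_mod_cast this
  funext i
  have hi := congrFun h ((i, a), b)
  rw [kronecker_one_mulVec_maxEnt_apply, maxEnt_apply] at hi
  rw [Pi.smul_apply, smul_eq_mul]
  exact mul_left_cancel₀ hD (by rw [hi]; ring)

theorem tilde_V_is_product_general {ι κ : Type*} [Fintype ι] [Fintype κ] [DecidableEq κ]
    (D : ℕ)
    (φ δ : κ → ι → ℂ)
    (hφon : ∀ l m, star (φ l) ⬝ᵥ φ m = if l = m then (1 : ℂ) else 0)
    (hφspan : Submodule.span ℂ (Set.range φ) = ⊤)
    (V : Matrix (ι × Fin D) (ι × Fin D) ℂ)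
    (hV : ∀ l, (V ⊗ₖ (1 : Matrix (Fin D) (Fin D) ℂ)).mulVec
        (fun p => φ l p.1.1 * maxEnt D (p.1.2, p.2)) =
        fun p => δ l p.1.1 * maxEnt D (p.1.2, p.2)) :
    V = (fun i j => ∑ l, δ l i * star (φ l j) : Matrix ι ι ℂ) ⊗ₖ
        (1 : Matrix (Fin D) (Fin D) ℂ) := by
  set M : Matrix ι ι ℂ := fun i j => ∑ l, δ l i * star (φ l j)
  have hblock (a b : Fin D) :
      V.submatrix (·, a) (·, b) = (1 : Matrix (Fin D) (Fin D) ℂ) a b • M :=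
    ext_of_mulVec_of_span_eq_top hφspan fun l => by
      rw [submatrix_mulVec_of_kronecker_one_mulVec_maxEnt (hV l), smul_mulVec,
        sum_outer_mulVec_of_orthonormal hφon]
  ext ⟨i, a⟩ ⟨j, b⟩
  rw [kronecker_apply, mul_comm, ← smul_eq_mul, ← Matrix.smul_apply, ← hblock]
  rfl

/-- If `Ṽ` on `H ⊗ ℂ^D` satisfies `(Ṽ ⊗ 𝟙_D)(|φ_l⟩ ⊗ |φ⁺_D⟩) = |δ_l⟩ ⊗ |φ⁺_D⟩` for every
member `l` of two orthonormal bases `{|φ_l⟩}, {|δ_l⟩}` of `H`, then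
`Ṽ = (Σ_l |δ_l⟩⟨φ_l|) ⊗ 𝟙_D`. Here `H = ℂ^ι` and bases are indexed by `κ`. -/
theorem tilde_V_is_product {ι κ : Type*} [Fintype ι] [DecidableEq ι] [Fintype κ] [DecidableEq κ]
    (D : ℕ)
    (φ δ : κ → ι → ℂ)
    (hφon : ∀ l m, star (φ l) ⬝ᵥ φ m = if l = m then (1 : ℂ) else 0)
    (hφspan : Submodule.span ℂ (Set.range φ) = ⊤)
    (hδon : ∀ l m, star (δ l) ⬝ᵥ δ m = if l = m then (1 : ℂ) else 0)
    (hδspan : Submodule.span ℂ (Set.range δ) = ⊤)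
    (V : Matrix (ι × Fin D) (ι × Fin D) ℂ)
    (hV : ∀ l, (V ⊗ₖ (1 : Matrix (Fin D) (Fin D) ℂ)).mulVec
        (fun p => φ l p.1.1 * maxEnt D (p.1.2, p.2)) =
        fun p => δ l p.1.1 * maxEnt D (p.1.2, p.2)) :
    V = (fun i j => ∑ l, δ l i * star (φ l j) : Matrix ι ι ℂ) ⊗ₖ
        (1 : Matrix (Fin D) (Fin D) ℂ) :=
  tilde_V_is_product_general D φ δ hφon hφspan V hV
end

section
/- Let V be a unitary on H ⊗ ℂ^D (H finite dimensional) and {|φ_l⟩}, {|δ_l⟩} orthonormal bases of H such that V†(|φ_l⟩⟨φ_l| ⊗ 𝟙_D)V = |δ_l⟩⟨δ_l| ⊗ 𝟙_D for all l. Then there exists for each l a unitary W_l on ℂ^D with V(|δ_l⟩ ⊗ v) = |φ_l⟩ ⊗ W_l v for all v ∈ ℂ^D. -/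
open Matrix Kronecker BigOperators

/-- If a unitary `V` on `H ⊗ ℂ^D` satisfies `V†(|φ_l⟩⟨φ_l| ⊗ 𝟙_D)V = |δ_l⟩⟨δ_l| ⊗ 𝟙_D`
for all members of two orthonormal bases `{|φ_l⟩}, {|δ_l⟩}` of `H`, then for each `l`
there is a unitary `W_l` on `ℂ^D` with `V(|δ_l⟩ ⊗ v) = |φ_l⟩ ⊗ W_l v` for all `v`. -/
theorem unitary_block_structure {ι κ : Type*} [Fintype ι] [DecidableEq ι]
    [Fintype κ] [DecidableEq κ] (D : ℕ)
    (φ δ : κ → ι → ℂ)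
    (hφon : ∀ l m, star (φ l) ⬝ᵥ φ m = if l = m then (1 : ℂ) else 0)
    (hφspan : Submodule.span ℂ (Set.range φ) = ⊤)
    (hδon : ∀ l m, star (δ l) ⬝ᵥ δ m = if l = m then (1 : ℂ) else 0)
    (hδspan : Submodule.span ℂ (Set.range δ) = ⊤)
    (V : Matrix (ι × Fin D) (ι × Fin D) ℂ)
    (hV : V ∈ Matrix.unitaryGroup (ι × Fin D) ℂ)
    (hcond : ∀ l, Vᴴ * (Matrix.vecMulVec (φ l) (star (φ l)) ⊗ₖ
          (1 : Matrix (Fin D) (Fin D) ℂ)) * V =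
        Matrix.vecMulVec (δ l) (star (δ l)) ⊗ₖ (1 : Matrix (Fin D) (Fin D) ℂ)) :
    ∀ l, ∃ W ∈ Matrix.unitaryGroup (Fin D) ℂ,
      ∀ v : Fin D → ℂ,
        V.mulVec (fun p => δ l p.1 * v p.2) = fun p => φ l p.1 * W.mulVec v p.2 := by
  classical
  intro l
  have hVV : Vᴴ * V = 1 := hV.1
  have hVV' : V * Vᴴ = 1 := hV.2
  set P : Matrix (ι × Fin D) (ι × Fin D) ℂ :=
    Matrix.vecMulVec (φ l) (star (φ l)) ⊗ₖ (1 : Matrix (Fin D) (Fin D) ℂ) with hP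
  set Q : Matrix (ι × Fin D) (ι × Fin D) ℂ :=
    Matrix.vecMulVec (δ l) (star (δ l)) ⊗ₖ (1 : Matrix (Fin D) (Fin D) ℂ) with hQ
  have hPV : P * V = V * (Vᴴ * P * V) := by
    rw [← mul_assoc, ← mul_assoc, hVV', one_mul]
  have hPV' : P * V = V * Q := by rw [hPV, hcond l]
  have hδ1 : ∑ q, star (δ l q) * δ l q = 1 := by
    simpa [dotProduct] using hδon l l
  have hφ1 : ∑ q, star (φ l q) * φ l q = 1 := by
    simpa [dotProduct] using hφon l l
  have hQfix : ∀ v : Fin D → ℂ,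
      Q.mulVec (fun p => δ l p.1 * v p.2) = fun p => δ l p.1 * v p.2 := by
    intro v
    funext pj
    obtain ⟨p, j⟩ := pj
    simp only [hQ, Matrix.mulVec, dotProduct, Fintype.sum_prod_type,
      Matrix.kroneckerMap_apply, Matrix.vecMulVec_apply, Pi.star_apply,
      Matrix.one_apply, mul_ite, mul_one, mul_zero, ite_mul, zero_mul,
      Finset.sum_ite_eq, Finset.mem_univ, if_true]
    calc ∑ q, δ l p * star (δ l q) * (δ l q * v j)
        = (∑ q, star (δ l q) * δ l q) * (δ l p * v j) := by
          rw [Finset.sum_mul]; apply Finset.sum_congr rfl; intro q _; ring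
    _ = δ l p * v j := by rw [hδ1, one_mul]
  set W : Matrix (Fin D) (Fin D) ℂ :=
    Matrix.of fun j k => ∑ q, star (φ l q) * ∑ r, V (q, j) (r, k) * δ l r with hWdef
  have hL1 : ∀ (g : ι × Fin D → ℂ) (p : ι) (j : Fin D),
      P.mulVec g (p, j) = φ l p * ∑ q, star (φ l q) * g (q, j) := by
    intro g p j
    simp only [hP, Matrix.mulVec, dotProduct, Fintype.sum_prod_type,
      Matrix.kroneckerMap_apply, Matrix.vecMulVec_apply, Pi.star_apply,
      Matrix.one_apply, mul_ite, mul_one, mul_zero, ite_mul, zero_mul,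
      Finset.sum_ite_eq, Finset.mem_univ, if_true, Finset.mul_sum]
    apply Finset.sum_congr rfl; intro q _; ring
  have hL2 : ∀ (v : Fin D → ℂ) (j : Fin D),
      ∑ q, star (φ l q) * (V.mulVec (fun p => δ l p.1 * v p.2)) (q, j)
        = W.mulVec v j := by
    intro v j
    simp only [hWdef, Matrix.mulVec, dotProduct, Fintype.sum_prod_type,
      Matrix.of_apply, Finset.mul_sum, Finset.sum_mul]
    conv_rhs => rw [Finset.sum_comm]
    apply Finset.sum_congr rfl; intro q _
    rw [Finset.sum_comm]
    apply Finset.sum_congr rfl; intro r _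
    apply Finset.sum_congr rfl; intro k _
    ring
  have key : ∀ v : Fin D → ℂ,
      V.mulVec (fun p => δ l p.1 * v p.2) = fun p => φ l p.1 * W.mulVec v p.2 := by
    intro v
    have h1 : V.mulVec (fun p => δ l p.1 * v p.2)
        = P.mulVec (V.mulVec (fun p => δ l p.1 * v p.2)) := by
      conv_lhs => rw [← hQfix v, Matrix.mulVec_mulVec, ← hPV', ← Matrix.mulVec_mulVec]
    rw [h1]
    funext pj
    obtain ⟨p, j⟩ := pj
    rw [hL1, hL2]
  refine ⟨W, ?_, key⟩
  rw [Matrix.mem_unitaryGroup_iff']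
  ext k k'
  have hy : ∀ k : Fin D,
      V.mulVec (fun p => δ l p.1 * (Pi.single k 1 : Fin D → ℂ) p.2)
        = fun p => φ l p.1 * W p.2 k := by
    intro k
    rw [key (Pi.single k 1)]
    funext p
    simp [Matrix.mulVec_single]
  have hinner :
      star (V.mulVec (fun p => δ l p.1 * (Pi.single k 1 : Fin D → ℂ) p.2)) ⬝ᵥ
        (V.mulVec (fun p => δ l p.1 * (Pi.single k' 1 : Fin D → ℂ) p.2))
      = star (fun p : ι × Fin D => δ l p.1 * (Pi.single k 1 : Fin D → ℂ) p.2) ⬝ᵥ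
          (fun p : ι × Fin D => δ l p.1 * (Pi.single k' 1 : Fin D → ℂ) p.2) := by
    rw [Matrix.star_mulVec, ← Matrix.dotProduct_mulVec, Matrix.mulVec_mulVec, hVV,
      Matrix.one_mulVec]
  have hA : star (fun p : ι × Fin D => φ l p.1 * W p.2 k) ⬝ᵥ
      (fun p : ι × Fin D => φ l p.1 * W p.2 k') = ∑ j, star (W j k) * W j k' := by
    simp only [dotProduct, Pi.star_apply, star_mul', Fintype.sum_prod_type]
    rw [Finset.sum_comm]
    apply Finset.sum_congr rfl; intro j _
    calc ∑ p, star (φ l p) * star (W j k) * (φ l p * W j k')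
        = (∑ p, star (φ l p) * φ l p) * (star (W j k) * W j k') := by
          rw [Finset.sum_mul]; apply Finset.sum_congr rfl; intro p _; ring
    _ = _ := by rw [hφ1, one_mul]
  have hB : star (fun p : ι × Fin D => δ l p.1 * (Pi.single k 1 : Fin D → ℂ) p.2) ⬝ᵥ
      (fun p : ι × Fin D => δ l p.1 * (Pi.single k' 1 : Fin D → ℂ) p.2)
      = if k = k' then (1:ℂ) else 0 := by
    simp only [dotProduct, Pi.star_apply, star_mul', Fintype.sum_prod_type,
      Pi.single_apply]
    simp only [apply_ite star, star_one, star_zero, mul_ite, mul_one, mul_zero,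
      ite_mul, zero_mul, one_mul, Finset.sum_ite_eq', Finset.mem_univ, if_true]
    by_cases h : k = k'
    · subst h; simpa using hδ1
    · rw [if_neg h]
      exact Finset.sum_eq_zero fun x _ => if_neg (fun hkk => h hkk.symm)
  have h2 := hinner
  rw [hy k, hy k', hA, hB] at h2
  rw [Matrix.mul_apply, Matrix.one_apply]
  simpa [Matrix.conjTranspose_apply] using h2
end

section
/- For any deterministic assignment a_{i,x} ∈ {−1, +1} (for parties i = 1,…,N and settings x = 0,1,2) and any bit string l ∈ {0,1}^N, the classical value of the Bell expression I_l, obtained by replacing each observable A_{i,x} by a_{i,x} in I_l = (−1)^{l_1}(N−1)·((a_{1,0}+a_{1,1})/√2)·∏_{i=2}^N a_{i,1} + Σ_{i=2}^N (−1)^{l_i}·((a_{1,0}−a_{1,1})/√2)·a_{i,0} − Σ_{i=2}^N (−1)^{l_1+l_i} a_{1,2} a_{i,2} ∏_{j=2,j≠i}^N a_{j,1}, is at most (√2 + 1)(N − 1). -/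
open BigOperators Finset

/-!
Bound each of the three terms of `I_l` termwise in absolute value. Since all `a i x` lie
in `[-1, 1]`, the first term is at most `(N - 1) |ã_{1,1}|`, the second at most
`(N - 1) |ã_{1,0}|` and the third at most `N - 1` in absolute value, while
`|ã_{1,0}| + |ã_{1,1}| = (|a_{1,0} - a_{1,1}| + |a_{1,0} + a_{1,1}|) / √2 ≤ 2 / √2 = √2`.
-/

lemma abs_add_add_abs_sub_le_two {a b : ℝ} (ha : |a| ≤ 1) (hb : |b| ≤ 1) :
    |a + b| + |a - b| ≤ 2 := by
  obtain ⟨ha₁, ha₂⟩ := abs_le.mp ha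
  obtain ⟨hb₁, hb₂⟩ := abs_le.mp hb
  rcases abs_cases (a + b) with ⟨h₁, -⟩ | ⟨h₁, -⟩ <;>
    rcases abs_cases (a - b) with ⟨h₂, -⟩ | ⟨h₂, -⟩ <;> linarith

lemma abs_add_div_sqrt_two_add_abs_sub_div_sqrt_two_le {a b : ℝ} (ha : |a| ≤ 1)
    (hb : |b| ≤ 1) : |(a + b) / √2| + |(a - b) / √2| ≤ √2 := by
  rw [abs_div, abs_div, abs_of_nonneg (Real.sqrt_nonneg 2), ← add_div]
  calc _ ≤ 2 / √2 := by gcongr; exact abs_add_add_abs_sub_le_two ha hb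
    _ = √2 := Real.div_sqrt

lemma abs_prod_le_one {ι : Type*} {s : Finset ι} {f : ι → ℝ} (hf : ∀ i ∈ s, |f i| ≤ 1) :
    |∏ i ∈ s, f i| ≤ 1 := by
  rw [abs_prod]
  exact prod_le_one (fun i _ => abs_nonneg (f i)) hf

lemma abs_mul_le_left_of_abs_le_one {x y : ℝ} (hy : |y| ≤ 1) : |x * y| ≤ |x| := by
  rw [abs_mul]
  exact mul_le_of_le_one_right (abs_nonneg x) hy

lemma sum_le_card_mul_of_abs_le {ι : Type*} {s : Finset ι} {f : ι → ℝ} {C : ℝ}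
    (hf : ∀ i ∈ s, |f i| ≤ C) : ∑ i ∈ s, f i ≤ #s * C := by
  rw [← nsmul_eq_mul]
  exact sum_le_card_nsmul s f C fun i hi => (le_abs_self _).trans (hf i hi)

/-- Parties are indexed by `Fin (K + 2)`, so `N = K + 2`, and party `1` of the paper is
index `0`. -/
theorem classical_bound_Il (K : ℕ) (a : Fin (K + 2) → Fin 3 → ℝ)
    (ha : ∀ i x, a i x = 1 ∨ a i x = -1) (l : Fin (K + 2) → Fin 2) :
    (-1 : ℝ) ^ ((l 0 : ℕ)) * (K + 1) * ((a 0 0 + a 0 1) / Real.sqrt 2) *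
        (∏ i ∈ univ.erase 0, a i 1)
      + (∑ i ∈ univ.erase 0, (-1 : ℝ) ^ ((l i : ℕ)) * ((a 0 0 - a 0 1) / Real.sqrt 2) * a i 0)
      - (∑ i ∈ univ.erase 0, (-1 : ℝ) ^ ((l 0 : ℕ) + (l i : ℕ)) * a 0 2 * a i 2 *
          ∏ j ∈ (univ.erase 0).erase i, a j 1)
      ≤ (Real.sqrt 2 + 1) * (K + 1) := by
  have hle : ∀ i x, |a i x| ≤ 1 := fun i x => by rcases ha i x with h | h <;> simp [h]
  have hcard : (#(univ.erase (0 : Fin (K + 2))) : ℝ) = K + 1 := by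
    simp [card_erase_of_mem]
  have hK : (0 : ℝ) ≤ K + 1 := by positivity
  set u := (a 0 0 + a 0 1) / √2
  set v := (a 0 0 - a 0 1) / √2
  have h₁ : (-1 : ℝ) ^ ((l 0 : ℕ)) * (K + 1) * u * ∏ i ∈ univ.erase 0, a i 1 ≤ (K + 1) * |u| :=
    calc _ ≤ |(-1 : ℝ) ^ ((l 0 : ℕ)) * (K + 1) * u| :=
          (le_abs_self _).trans <|
            abs_mul_le_left_of_abs_le_one (abs_prod_le_one fun i _ => hle i 1)
      _ = (K + 1) * |u| := by rw [abs_mul, abs_mul, abs_neg_one_pow, one_mul, abs_of_nonneg hK]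
  have h₂ : ∑ i ∈ univ.erase 0, (-1 : ℝ) ^ ((l i : ℕ)) * v * a i 0 ≤ (K + 1) * |v| := by
    rw [← hcard]
    refine sum_le_card_mul_of_abs_le fun i _ => ?_
    calc _ ≤ |(-1 : ℝ) ^ ((l i : ℕ)) * v| := abs_mul_le_left_of_abs_le_one (hle i 0)
      _ = |v| := by rw [abs_mul, abs_neg_one_pow, one_mul]
  have h₃ : -∑ i ∈ univ.erase 0, (-1 : ℝ) ^ ((l 0 : ℕ) + (l i : ℕ)) * a 0 2 * a i 2 *
      ∏ j ∈ (univ.erase 0).erase i, a j 1 ≤ (K + 1) * 1 := by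
    rw [← hcard, ← sum_neg_distrib]
    refine sum_le_card_mul_of_abs_le fun i _ => ?_
    rw [abs_neg, abs_mul, abs_mul, abs_mul, abs_neg_one_pow, one_mul]
    exact mul_le_one₀ (mul_le_one₀ (hle 0 2) (abs_nonneg _) (hle i 2)) (abs_nonneg _)
      (abs_prod_le_one fun j _ => hle j 1)
  have huv : (K + 1) * (|u| + |v|) ≤ (K + 1) * √2 :=
    mul_le_mul_of_nonneg_left
      (abs_add_div_sqrt_two_add_abs_sub_div_sqrt_two_le (hle 0 0) (hle 0 1)) hK
  linarith
end
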